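/- arXiv:1805.07670 — 2 statements merged into one kernel-verified Lean document; each statement's English description precedes it below -/
import Mathlib

section
/- If φ : P → G is an epimorphism in the category H of set-system hypergraphs and P is projective in H, then G is projective in H. Consequently H does not have enough projectives. -/
open CategoryTheory

/-- A set-system hypergraph: vertex set, edge set, and an endpoint map into the power set. -/
structure SSHyp : Type 1 where
  V : Type
  E : Type
  ε : E → Set V

/-- A morphism of set-system hypergraphs: vertex and edge maps such that the endpoint
set of the image edge is the image of the endpoint set. -/
structure SSHom (G H : SSHyp) where
  vmap : G.V → H.V
  emap : G.E → H.E
  comm : ∀ e, H.ε (emap e) = vmap '' G.ε e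

theorem SSHom.ext' {G H : SSHyp} {f g : SSHom G H}
    (hv : f.vmap = g.vmap) (he : f.emap = g.emap) : f = g := by
  cases f; cases g; cases hv; cases he; rfl

instance : Category SSHyp where
  Hom := SSHom
  id G := ⟨id, id, fun e => by simp⟩
  comp f g := ⟨g.vmap ∘ f.vmap, g.emap ∘ f.emap,
    fun e => by simp [g.comm, f.comm, Set.image_image]⟩
  id_comp f := SSHom.ext' rfl rfl
  comp_id f := SSHom.ext' rfl rfl
  assoc f g h := SSHom.ext' rfl rfl

-- auxiliary lemmas to insert above the theorem

lemma SSHyp.comp_vmap {A B C : SSHyp} (f : A ⟶ B) (g : B ⟶ C) :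
    (f ≫ g).vmap = g.vmap ∘ f.vmap := rfl

lemma SSHyp.comp_emap {A B C : SSHyp} (f : A ⟶ B) (g : B ⟶ C) :
    (f ≫ g).emap = g.emap ∘ f.emap := rfl

/-- Surjective components imply epi. -/
lemma SSHyp.epi_of_surjective {G H : SSHyp} (φ : G ⟶ H)
    (hv : Function.Surjective φ.vmap) (he : Function.Surjective φ.emap) : Epi φ := by
  constructor
  intro Z a b hab
  apply SSHom.ext'
  · funext v
    obtain ⟨u, rfl⟩ := hv v
    exact congrFun (congrArg SSHom.vmap hab) u
  · funext e
    obtain ⟨u, rfl⟩ := he e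
    exact congrFun (congrArg SSHom.emap hab) u

/-- Epi implies surjective components. -/
lemma SSHyp.surjective_of_epi {G H : SSHyp} (φ : G ⟶ H) (hφ : Epi φ) :
    Function.Surjective φ.vmap ∧ Function.Surjective φ.emap := by
  classical
  constructor
  · by_contra hns
    rw [Function.Surjective] at hns
    push_neg at hns
    obtain ⟨v0, hv0⟩ := hns
    set X : SSHyp := ⟨H.V ⊕ Unit, H.E × Set (H.V ⊕ Unit), fun p => p.2⟩ with hX
    set g : H ⟶ X := ⟨Sum.inl, fun e => (e, Sum.inl '' H.ε e), fun e => rfl⟩ with hg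
    set hvm : H.V → H.V ⊕ Unit := fun v => if v = v0 then Sum.inr () else Sum.inl v with hhvm
    set h : H ⟶ X := ⟨hvm, fun e => (e, hvm '' H.ε e), fun e => rfl⟩ with hh
    have key : φ ≫ g = φ ≫ h := by
      apply SSHom.ext'
      · funext v
        show Sum.inl (φ.vmap v) = hvm (φ.vmap v)
        have : φ.vmap v ≠ v0 := fun hc => hv0 v hc
        simp [hhvm, this]
      · funext e
        show (φ.emap e, Sum.inl '' H.ε (φ.emap e)) = (φ.emap e, hvm '' H.ε (φ.emap e))
        have himg : Sum.inl '' H.ε (φ.emap e) = hvm '' H.ε (φ.emap e) := by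
          apply Set.image_congr
          intro a ha
          have : a ≠ v0 := by
            rw [φ.comm] at ha
            obtain ⟨u, _, rfl⟩ := ha
            exact fun hc => hv0 u hc
          simp [hhvm, this]
        rw [himg]
      
    have := (cancel_epi φ).1 key
    have hveq : g.vmap v0 = h.vmap v0 := congrFun (congrArg SSHom.vmap this) v0
    simp [hg, hh, hhvm] at hveq
  · by_contra hns
    rw [Function.Surjective] at hns
    push_neg at hns
    obtain ⟨e0, he0⟩ := hns
    set X : SSHyp := ⟨H.V, H.E × Bool, fun p => H.ε p.1⟩ with hX
    set g : H ⟶ X := ⟨id, fun e => (e, false), fun e => by simp [hX]; rfl⟩ with hg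
    set h : H ⟶ X := ⟨id, fun e => (e, if e = e0 then true else false),
      fun e => by simp [hX]; rfl⟩ with hh
    have key : φ ≫ g = φ ≫ h := by
      apply SSHom.ext'
      · rfl
      · funext e
        show (φ.emap e, false) = (φ.emap e, if φ.emap e = e0 then true else false)
        have : φ.emap e ≠ e0 := fun hc => he0 e hc
        simp [this]
    have := (cancel_epi φ).1 key
    have heq : g.emap e0 = h.emap e0 := congrFun (congrArg SSHom.emap this) e0
    simp [hg, hh] at heq
    exact Bool.noConfusion (congrArg Prod.snd heq)

/-- A hypergraph all of whose edges have empty endpoint set is projective. -/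
lemma SSHyp.projective_of_empty (G : SSHyp) (hG : ∀ e, G.ε e = ∅) : Projective G := by
  classical
  constructor
  intro E X f e he
  obtain ⟨hv, hem⟩ := SSHyp.surjective_of_epi e he
  refine ⟨⟨fun v => (hv (f.vmap v)).choose, fun p => (hem (f.emap p)).choose, ?_⟩, ?_⟩
  · intro p
    rw [hG p, Set.image_empty]
    have h1 : e.emap (hem (f.emap p)).choose = f.emap p := (hem (f.emap p)).choose_spec
    have h2 := e.comm (hem (f.emap p)).choose
    rw [h1, f.comm p, hG p, Set.image_empty] at h2
    exact Set.image_eq_empty.1 h2.symm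
  · apply SSHom.ext'
    · funext v
      exact (hv (f.vmap v)).choose_spec
    · funext p
      exact (hem (f.emap p)).choose_spec

/-- A projective hypergraph has all edges with empty endpoint set. -/
lemma SSHyp.empty_of_projective (P : SSHyp) (hP : Projective P) : ∀ e, P.ε e = ∅ := by
  intro p0
  by_contra hne
  obtain ⟨v0, hv0⟩ := Set.nonempty_iff_ne_empty.2 hne
  set E : SSHyp := ⟨P.V × Bool, P.E, fun e => {x | x.1 ∈ P.ε e}⟩ with hE
  set e : E ⟶ P := ⟨Prod.fst, id, fun ed => by
    ext v
    constructor
    · intro hv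
      exact ⟨(v, true), hv, rfl⟩
    · rintro ⟨⟨u, b⟩, hu, rfl⟩
      exact hu⟩ with he
  haveI : Epi e := SSHyp.epi_of_surjective e (fun v => ⟨(v, true), rfl⟩) (fun p => ⟨p, rfl⟩)
  obtain ⟨g, hg⟩ := hP.factors (𝟙 P) e
  have hvm : ∀ v, (g.vmap v).1 = v := fun v => congrFun (congrArg SSHom.vmap hg) v
  have hem : ∀ p, g.emap p = p := fun p => congrFun (congrArg SSHom.emap hg) p
  have hcomm := g.comm p0
  rw [hem p0] at hcomm
  have h1 : (v0, true) ∈ E.ε p0 := hv0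
  have h2 : (v0, false) ∈ E.ε p0 := hv0
  rw [hcomm] at h1 h2
  obtain ⟨u, _, hu⟩ := h1
  obtain ⟨w, _, hw⟩ := h2
  have hu' : u = v0 := by have := hvm u; rw [hu] at this; exact this.symm
  have hw' : w = v0 := by have := hvm w; rw [hw] at this; exact this.symm
  rw [hu'] at hu
  rw [hw'] at hw
  rw [hu] at hw
  exact Bool.noConfusion (congrArg Prod.snd hw)

/-- Epic images of projective set-system hypergraphs are projective; consequently the
category of set-system hypergraphs does not have enough projectives. -/
theorem epi_image_of_projective_and_not_enough_projectives :
    (∀ (P G : SSHyp) (φ : P ⟶ G), Epi φ → Projective P → Projective G) ∧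
      ¬ EnoughProjectives SSHyp := by
  constructor
  · intro P G φ hφ hP
    apply SSHyp.projective_of_empty
    intro e
    obtain ⟨u, hu⟩ := (SSHyp.surjective_of_epi φ hφ).2 e
    rw [← hu, φ.comm, SSHyp.empty_of_projective P hP, Set.image_empty]
  · intro h
    set X : SSHyp := ⟨Unit, Unit, fun _ => Set.univ⟩ with hX
    obtain ⟨pres⟩ := h.presentation X
    have hemp := SSHyp.empty_of_projective pres.p pres.projective
    obtain ⟨u, hu⟩ := (SSHyp.surjective_of_epi pres.f pres.epi).2 ()
    have := pres.f.comm u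
    rw [hu, hemp, Set.image_empty] at this
    have : (() : Unit) ∈ (∅ : Set Unit) := by
      rw [← this]; trivial
    exact this
end

section
/- The incidence-forming functor I : H → R is neither continuous nor cocontinuous; in particular it preserves neither the binary product of the one-edge path P₁ with itself nor the coequalizer identifying the two vertices of P₁. Consequently I admits no left or right adjoint. -/
open CategoryTheory

/-- An incidence hypergraph: vertex set, edge set, incidence set, with port map `ς`
and attachment map `ω`. -/
structure IncHyp : Type 1 where
  V : Type
  E : Type
  I : Type
  ς : I → V
  ω : I → E

/-- A morphism of incidence hypergraphs: vertex, edge, and incidence maps commuting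
with the port and attachment maps. -/
structure IncHom (G H : IncHyp) where
  vmap : G.V → H.V
  emap : G.E → H.E
  imap : G.I → H.I
  comm_v : ∀ i, H.ς (imap i) = vmap (G.ς i)
  comm_e : ∀ i, H.ω (imap i) = emap (G.ω i)

theorem IncHom.ext' {G H : IncHyp} {f g : IncHom G H}
    (hv : f.vmap = g.vmap) (he : f.emap = g.emap) (hi : f.imap = g.imap) : f = g := by
  cases f; cases g; cases hv; cases he; cases hi; rfl

instance : Category IncHyp where
  Hom := IncHom
  id G := ⟨id, id, id, fun _ => rfl, fun _ => rfl⟩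
  comp f g := ⟨g.vmap ∘ f.vmap, g.emap ∘ f.emap, g.imap ∘ f.imap,
    fun i => by simp [g.comm_v, f.comm_v],
    fun i => by simp [g.comm_e, f.comm_e]⟩
  id_comp f := IncHom.ext' rfl rfl rfl
  comp_id f := IncHom.ext' rfl rfl rfl
  assoc f g h := IncHom.ext' rfl rfl rfl


open Limits

/-- The incidence-forming functor `𝓘 : H ⥤ R`: incidences are the pairs `(v,e)` with
`v ∈ ε(e)`. -/
def Ifun : SSHyp ⥤ IncHyp where
  obj G := ⟨G.V, G.E, {p : G.V × G.E // p.1 ∈ G.ε p.2}, fun p => p.1.1, fun p => p.1.2⟩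
  map f := ⟨f.vmap, f.emap,
    fun p => ⟨(f.vmap p.1.1, f.emap p.1.2), by
      rw [f.comm]; exact Set.mem_image_of_mem _ p.2⟩,
    fun p => rfl, fun p => rfl⟩
  map_id G := IncHom.ext' rfl rfl rfl
  map_comp f g := IncHom.ext' rfl rfl rfl

/-- `P₁`: two vertices and a single edge whose endpoint set is both vertices. -/
def P1H : SSHyp := ⟨Bool, PUnit, fun _ => Set.univ⟩

/-- The single-vertex, edgeless hypergraph. -/
def V1H : SSHyp := ⟨PUnit, PEmpty, PEmpty.elim⟩

/-- The map picking out the vertex `v = false` of `P₁`. -/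
def αH : V1H ⟶ P1H := ⟨fun _ => false, PEmpty.elim, fun e => e.elim⟩

/-- The map picking out the vertex `w = true` of `P₁`. -/
def βH : V1H ⟶ P1H := ⟨fun _ => true, PEmpty.elim, fun e => e.elim⟩


theorem punit_eq {α : Type} (h : α = PUnit) (a b : α) : a = b := by
  subst h; cases a; cases b; rfl

/-- Candidate product of `P₁` with itself in `H`. -/
def ProdH : SSHyp :=
  ⟨Bool × Bool, {S : Set (Bool × Bool) // Prod.fst '' S = Set.univ ∧ Prod.snd '' S = Set.univ},
    fun S => S.1⟩

def fstH : ProdH ⟶ P1H := ⟨Prod.fst, fun _ => ⟨⟩, fun S => S.2.1.symm⟩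

def sndH : ProdH ⟶ P1H := ⟨Prod.snd, fun _ => ⟨⟩, fun S => S.2.2.symm⟩

def prodFan : BinaryFan P1H P1H := BinaryFan.mk fstH sndH

def prodFanIsLimit : IsLimit prodFan := by
  refine BinaryFan.isLimitMk (fun s => ?_) (fun s => ?_) (fun s => ?_) (fun s m h1 h2 => ?_)
  · refine ⟨fun v => (s.fst.vmap v, s.snd.vmap v),
      fun e => ⟨(fun v => (s.fst.vmap v, s.snd.vmap v)) '' (s.pt.ε e), ?_, ?_⟩,
      fun e => rfl⟩
    · rw [Set.image_image]; exact (s.fst.comm e).symm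
    · rw [Set.image_image]; exact (s.snd.comm e).symm
  · exact SSHom.ext' rfl (funext fun e => punit_eq rfl _ _)
  · exact SSHom.ext' rfl (funext fun e => punit_eq rfl _ _)
  · have hv : m.vmap = fun v => (s.fst.vmap v, s.snd.vmap v) := by
      funext v
      exact Prod.ext (congrFun (congrArg SSHom.vmap h1) v) (congrFun (congrArg SSHom.vmap h2) v)
    refine SSHom.ext' hv (funext fun e => Subtype.ext ?_)
    have := m.comm e
    rw [hv] at this; exact this

/-- A one-incidence test object. -/
def TOne : IncHyp := ⟨PUnit, PUnit, PUnit, fun _ => ⟨⟩, fun _ => ⟨⟩⟩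

def SFull : ProdH.E := ⟨Set.univ, by simp, by simp⟩

def SDiag : ProdH.E :=
  ⟨{p | p.1 = p.2}, by
    ext b; simp only [Set.mem_image, Set.mem_univ, iff_true]
    exact ⟨(b, b), rfl, rfl⟩, by
    ext b; simp only [Set.mem_image, Set.mem_univ, iff_true]
    exact ⟨(b, b), rfl, rfl⟩⟩

def mOf (S : ProdH.E) (h : ((false : Bool), (false : Bool)) ∈ S.1) : TOne ⟶ Ifun.obj ProdH :=
  ⟨fun _ => (false, false), fun _ => S, fun _ => ⟨((false, false), S), h⟩,
    fun _ => rfl, fun _ => rfl⟩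

theorem not_preserves_prod : ¬ Nonempty (PreservesLimit (pair P1H P1H) Ifun) := by
  rintro ⟨h⟩
  have hl : IsLimit (Ifun.mapCone prodFan) := isLimitOfPreserves Ifun prodFanIsLimit
  have hm : mOf SFull trivial = mOf SDiag rfl := by
    apply hl.hom_ext
    rintro ⟨j⟩
    cases j <;>
      exact IncHom.ext' rfl (funext fun e => punit_eq rfl _ _)
        (funext fun i => Subtype.ext rfl)
  have hS : SFull = SDiag := congrFun (congrArg IncHom.emap hm) ⟨⟩
  have : ((false : Bool), (true : Bool)) ∈ SDiag.1 := by
    rw [← hS]; trivial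
  exact Bool.noConfusion this

/-- Candidate coequalizer: one vertex, one edge. -/
def QH : SSHyp := ⟨PUnit, PUnit, fun _ => Set.univ⟩

def qH : P1H ⟶ QH :=
  ⟨fun _ => ⟨⟩, id, fun e => by
    refine (Set.eq_univ_of_forall fun x => ?_).symm
    exact ⟨false, trivial, punit_eq rfl _ _⟩⟩

def coeqCofork : Cofork αH βH :=
  Cofork.ofπ qH (SSHom.ext' (funext fun _ => rfl) (funext fun e => e.elim))

def coeqIsColimit : IsColimit coeqCofork := by
  refine Cofork.IsColimit.mk _ (fun s => ?_) (fun s => ?_) (fun s m hm => ?_)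
  · have hkey : s.π.vmap false = s.π.vmap true :=
      congrFun (congrArg SSHom.vmap s.condition) ⟨⟩
    refine ⟨fun _ => s.π.vmap false, s.π.emap, fun e => ?_⟩
    refine (s.π.comm e).trans ?_
    apply Set.ext
    intro x
    constructor
    · rintro ⟨b, -, rfl⟩
      cases b
      · exact ⟨⟨⟩, trivial, rfl⟩
      · exact ⟨⟨⟩, trivial, hkey⟩
    · rintro ⟨-, -, rfl⟩
      exact ⟨false, trivial, rfl⟩
  · have hkey : s.π.vmap false = s.π.vmap true :=
      congrFun (congrArg SSHom.vmap s.condition) ⟨⟩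
    refine SSHom.ext' (funext fun b => ?_) rfl
    cases b
    · rfl
    · exact hkey
  · refine SSHom.ext' (funext fun x => ?_) (funext fun e => ?_)
    · exact congrFun (congrArg SSHom.vmap hm) false
    · exact congrFun (congrArg SSHom.emap hm) e

/-- A two-incidence test object. -/
def TTwo : IncHyp := ⟨PUnit, PUnit, Bool, fun _ => ⟨⟩, fun _ => ⟨⟩⟩

def piT : Ifun.obj P1H ⟶ TTwo :=
  ⟨fun _ => ⟨⟩, fun _ => ⟨⟩, fun p => p.1.1, fun _ => rfl, fun _ => rfl⟩

def zT : Ifun.obj V1H ⟶ TTwo :=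
  ⟨fun _ => ⟨⟩, fun e => e.elim, fun i => i.1.2.elim, fun i => i.1.2.elim, fun i => i.1.2.elim⟩

def testCocone : Cocone (parallelPair αH βH ⋙ Ifun) where
  pt := TTwo
  ι :=
    { app := fun j => WalkingParallelPair.casesOn j zT piT
      naturality := fun j j' f => by
        change WalkingParallelPairHom j j' at f
        cases f <;>
          exact IncHom.ext' (funext fun v => rfl)
            (funext fun e => by first | exact e.elim | rfl)
            (funext fun i => by first | exact i.1.2.elim | rfl) }

theorem not_preserves_coeq : ¬ Nonempty (PreservesColimit (parallelPair αH βH) Ifun) := by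
  rintro ⟨h⟩
  have hc : IsColimit (Ifun.mapCocone coeqCofork) := isColimitOfPreserves Ifun coeqIsColimit
  have hfac := hc.fac testCocone WalkingParallelPair.one
  have hfacI := congrArg IncHom.imap hfac
  have e1 : ((Ifun.mapCocone coeqCofork).ι.app WalkingParallelPair.one ≫ hc.desc testCocone).imap
      ⟨((false : Bool), ⟨⟩), trivial⟩ =
      ((Ifun.mapCocone coeqCofork).ι.app WalkingParallelPair.one ≫ hc.desc testCocone).imap
      ⟨((true : Bool), ⟨⟩), trivial⟩ := by
    show (hc.desc testCocone).imap _ = (hc.desc testCocone).imap _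
    exact congrArg _ (Subtype.ext rfl)
  rw [hfacI] at e1
  exact Bool.noConfusion e1


/-- The incidence-forming functor is neither continuous nor cocontinuous: it does
not preserve the binary product of `P₁` with itself, nor the coequalizer of the two
vertex-picking maps of `P₁`; consequently it admits neither a left nor a right
adjoint. -/
theorem incidence_forming_functor_fails :
    ¬ Nonempty (PreservesLimit (pair P1H P1H) Ifun) ∧
    ¬ Nonempty (PreservesColimit (parallelPair αH βH) Ifun) ∧
    ¬ (∃ L : IncHyp ⥤ SSHyp, Nonempty (L ⊣ Ifun)) ∧
    ¬ (∃ R : IncHyp ⥤ SSHyp, Nonempty (Ifun ⊣ R)) := by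
  refine ⟨not_preserves_prod, not_preserves_coeq, ?_, ?_⟩
  · rintro ⟨L, ⟨adj⟩⟩
    have := adj.rightAdjoint_preservesLimits
    exact not_preserves_prod ⟨inferInstance⟩
  · rintro ⟨R, ⟨adj⟩⟩
    have := adj.leftAdjoint_preservesColimits
    exact not_preserves_coeq ⟨inferInstance⟩
end
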